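/- Let m ≥ 0 be an integer and r0 > 0 a real number. Then the integral ∫_0^{r0} J_{m+1/2}(r)² · r dr is positive, and the ratio (r0^{−1/2} · J_{m+1/2}(r0)) / √(∫_0^{r0} J_{m+1/2}(r)² · r dr) equals (√(2m+3) · r0^{−3/2} + I_1(m, r0)) / √(1 + I_2(m, r0)), where J_α is the Bessel function of the first kind defined by its power series. -/

import Mathlib

/-!
For `x > 0`, `J_ν(x) = (x/2)^ν / Γ(ν+1) · h_ν((x/2)²)`, where `h_ν` is an entire power series
with `h_ν(0) = 1` whose coefficients are bounded by `1/k!`; so `h_ν²` is the Cauchy-product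
series, with coefficients `b_n` bounded by `2^n/n!`. Integrating `J_ν(r)² r` term by term gives
`∫₀^R J_ν(r)² r dr = ((R/2)^ν/Γ(ν+1))² R² Σ b_n (R/2)^{2n} / (2ν+2n+2)`, so the prefactor
`(R/2)^ν/Γ(ν+1)` cancels from the ratio. For `ν = m + 1/2`, `I₁` and `1 + I₂` are these two
series with their leading terms split off, rescaled by `√(2m+3) R^{-3/2}` and by `2m+3`.
The integral is positive because its continuous, nonnegative integrand is positive near `0`,
where `h_ν ≈ 1`.
-/

open Real

/-- Bessel function of the first kind, defined by its power series. -/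
noncomputable def besselJ (α : ℝ) (x : ℝ) : ℝ :=
  ∑' k : ℕ,
    ((-1 : ℝ) ^ k / ((Nat.factorial k : ℝ) * Real.Gamma ((k : ℝ) + α + 1))) *
      (x / 2) ^ (2 * (k : ℝ) + α)

/-- `I₁(m, r₀)` from the paper. -/
noncomputable def I1 (m : ℕ) (r0 : ℝ) : ℝ :=
  ∑' k : ℕ,
    ((-1 : ℝ) ^ (k + 1) * Real.Gamma ((m : ℝ) + 3 / 2) * Real.sqrt (2 * (m : ℝ) + 3) /
        ((Nat.factorial (k + 1) : ℝ) * Real.Gamma ((m : ℝ) + (k + 1 : ℕ) + 3 / 2))) *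
      (r0 / 2) ^ (2 * (k + 1)) * r0 ^ (-(3 / 2) : ℝ)

/-- `I₂(m, r₀)` from the paper. -/
noncomputable def I2 (m : ℕ) (r0 : ℝ) : ℝ :=
  ∑' k : ℕ,
    (-1 : ℝ) ^ (k + 1) * (r0 / 2) ^ (2 * (k + 1)) *
      ((2 * (m : ℝ) + 3) / (2 * (m : ℝ) + 2 * ((k : ℝ) + 1) + 3)) *
      ∑ p ∈ Finset.HasAntidiagonal.antidiagonal (k + 1),
        Real.Gamma ((m : ℝ) + 3 / 2) ^ 2 /
          ((Nat.factorial p.1 : ℝ) * (Nat.factorial p.2 : ℝ) *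
            Real.Gamma ((m : ℝ) + (p.1 : ℝ) + 3 / 2) * Real.Gamma ((m : ℝ) + (p.2 : ℝ) + 3 / 2))

open Finset Filter Topology
open scoped Nat

lemma sum_antidiagonal_pow_div_factorial (C D : ℝ) (n : ℕ) :
    ∑ p ∈ antidiagonal n, C ^ p.1 / p.1 ! * (D ^ p.2 / p.2 !) = (C + D) ^ n / n ! := by
  rw [(Commute.all C D).add_pow', sum_div]
  refine sum_congr rfl fun p hp => ?_
  rw [HasAntidiagonal.mem_antidiagonal] at hp
  subst hp
  have h := Nat.add_choose_mul_factorial_mul_factorial p.1 p.2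
  rw [← Nat.choose_symm_add] at h
  rw [nsmul_eq_mul, eq_div_iff (by positivity), ← h]
  push_cast
  field_simp

def ExpBoundedCoeffs (C : ℝ) (a : ℕ → ℝ) : Prop := ∀ k, |a k| ≤ C ^ k / k !

namespace ExpBoundedCoeffs

variable {C D : ℝ} {a b : ℕ → ℝ}

lemma summable_norm_mul_pow (ha : ExpBoundedCoeffs C a) (y : ℝ) :
    Summable fun k => ‖a k * y ^ k‖ := by
  refine .of_nonneg_of_le (fun _ => norm_nonneg _) (fun k => ?_)
    (Real.summable_pow_div_factorial (C * |y|))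
  rw [norm_mul, norm_pow, Real.norm_eq_abs, Real.norm_eq_abs, mul_pow, mul_div_right_comm]
  exact mul_le_mul_of_nonneg_right (ha k) (by positivity)

lemma continuous_tsum_mul_pow (ha : ExpBoundedCoeffs C a) :
    Continuous fun y => ∑' k, a k * y ^ k := by
  refine continuous_iff_continuousAt.2 fun y₀ => ?_
  have hbound : ∀ k, ∀ y ∈ Set.Icc (y₀ - 1) (y₀ + 1),
      ‖a k * y ^ k‖ ≤ ‖a k * (|y₀| + 1) ^ k‖ := by
    intro k y hy
    rw [norm_mul, norm_mul, norm_pow, norm_pow, Real.norm_eq_abs, Real.norm_eq_abs,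
      Real.norm_of_nonneg (by positivity : (0:ℝ) ≤ |y₀| + 1)]
    gcongr
    exact abs_le.2 ⟨by linarith [neg_abs_le y₀, hy.1], by linarith [le_abs_self y₀, hy.2]⟩
  exact (continuousOn_tsum (fun k => (continuous_const.mul (continuous_pow k)).continuousOn)
    (ha.summable_norm_mul_pow _) hbound).continuousAt (Icc_mem_nhds (by linarith) (by linarith))

lemma sum_antidiagonal (ha : ExpBoundedCoeffs C a) (hb : ExpBoundedCoeffs D b) :
    ExpBoundedCoeffs (C + D) fun n => ∑ p ∈ antidiagonal n, a p.1 * b p.2 := by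
  intro n
  rw [← sum_antidiagonal_pow_div_factorial]
  refine (abs_sum_le_sum_abs _ _).trans (sum_le_sum fun p _ => ?_)
  rw [abs_mul]
  exact mul_le_mul (ha _) (hb _) (abs_nonneg _) ((abs_nonneg _).trans (ha _))

lemma tsum_mul_pow_mul_tsum_mul_pow (ha : ExpBoundedCoeffs C a) (hb : ExpBoundedCoeffs D b)
    (y : ℝ) : (∑' k, a k * y ^ k) * (∑' k, b k * y ^ k) =
      ∑' n, (∑ p ∈ antidiagonal n, a p.1 * b p.2) * y ^ n := by
  rw [tsum_mul_tsum_eq_tsum_sum_antidiagonal_of_summable_norm (ha.summable_norm_mul_pow y)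
    (hb.summable_norm_mul_pow y)]
  refine tsum_congr fun n => ?_
  rw [sum_mul]
  refine sum_congr rfl fun p hp => ?_
  rw [← HasAntidiagonal.mem_antidiagonal.1 hp, pow_add]
  ring

end ExpBoundedCoeffs

lemma norm_mul_rpow_le_of_mem_Icc {c e r R : ℝ} (he : 0 ≤ e) (hr : r ∈ Set.Icc 0 R) :
    ‖c * r ^ e‖ ≤ |c| * R ^ e := by
  rw [norm_mul, Real.norm_eq_abs, Real.norm_of_nonneg (Real.rpow_nonneg hr.1 e)]
  exact mul_le_mul_of_nonneg_left (Real.rpow_le_rpow hr.1 hr.2 he) (abs_nonneg c)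

section RpowSeries

variable {c e : ℕ → ℝ} {R : ℝ}

lemma continuousOn_tsum_mul_rpow (he : ∀ n, 0 ≤ e n)
    (hc : Summable fun n => |c n| * R ^ e n) :
    ContinuousOn (fun r => ∑' n, c n * r ^ e n) (Set.Icc 0 R) :=
  continuousOn_tsum
    (fun n => (continuous_const.mul (Real.continuous_rpow_const (he n))).continuousOn)
    hc fun n _ hr => norm_mul_rpow_le_of_mem_Icc (he n) hr

lemma integral_tsum_mul_rpow (hR : 0 ≤ R) (he : ∀ n, 0 ≤ e n)
    (hc : Summable fun n => |c n| * R ^ e n) :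
    ∫ r in (0 : ℝ)..R, ∑' n, c n * r ^ e n = ∑' n, c n * R ^ (e n + 1) / (e n + 1) := by
  have hbound : ∀ n, ∀ r ∈ Set.uIoc 0 R, ‖c n * r ^ e n‖ ≤ |c n| * R ^ e n := by
    intro n r hr
    rw [Set.uIoc_of_le hR] at hr
    exact norm_mul_rpow_le_of_mem_Icc (he n) (Set.Ioc_subset_Icc_self hr)
  have hsum := intervalIntegral.hasSum_integral_of_dominated_convergence
    (μ := MeasureTheory.volume) (a := 0) (b := R)
    (F := fun n r => c n * r ^ e n) (f := fun r => ∑' n, c n * r ^ e n)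
    (fun n _ => |c n| * R ^ e n)
    (fun n => (continuous_const.mul (Real.continuous_rpow_const (he n))).aestronglyMeasurable)
    (fun n => .of_forall (hbound n))
    (.of_forall fun _ _ => hc) intervalIntegrable_const
    (.of_forall fun r hr => (Summable.of_norm_bounded hc (fun n => hbound n r hr)).hasSum)
  refine hsum.tsum_eq.symm.trans (tsum_congr fun n => ?_)
  rw [intervalIntegral.integral_const_mul, integral_rpow (Or.inl (by linarith [he n])),
    Real.zero_rpow (by linarith [he n]), sub_zero, mul_div_assoc]

end RpowSeries

section Bessel

variable {ν : ℝ}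

noncomputable def besselJCoeff (ν : ℝ) (k : ℕ) : ℝ :=
  (-1) ^ k * Gamma (ν + 1) / (k ! * Gamma (k + ν + 1))

noncomputable def besselJSeries (ν y : ℝ) : ℝ := ∑' k, besselJCoeff ν k * y ^ k

noncomputable def besselJSqCoeff (ν : ℝ) (n : ℕ) : ℝ :=
  ∑ p ∈ antidiagonal n, besselJCoeff ν p.1 * besselJCoeff ν p.2

lemma Gamma_add_one_le_Gamma_nat_add_add_one (hν : 0 ≤ ν) (k : ℕ) :
    Gamma (ν + 1) ≤ Gamma (k + ν + 1) := by
  induction k with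
  | zero => simp
  | succ k ih =>
    have hk : (0 : ℝ) ≤ k := k.cast_nonneg
    rw [show ((k + 1 : ℕ) : ℝ) + ν + 1 = (k + ν + 1) + 1 by push_cast; ring,
      Gamma_add_one (s := k + ν + 1) (by positivity)]
    nlinarith [Gamma_pos_of_pos (show 0 < (k : ℝ) + ν + 1 by positivity)]

lemma expBoundedCoeffs_besselJCoeff (hν : 0 ≤ ν) : ExpBoundedCoeffs 1 (besselJCoeff ν) := by
  intro k
  have hΓ : 0 < Gamma (ν + 1) := Gamma_pos_of_pos (by linarith)
  rw [besselJCoeff, abs_div, abs_mul, abs_pow, abs_neg, abs_one, one_pow, one_mul,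
    abs_of_pos hΓ, abs_of_pos (by positivity), div_le_div_iff₀ (by positivity)
    (by positivity), one_mul, mul_comm]
  exact mul_le_mul_of_nonneg_left (Gamma_add_one_le_Gamma_nat_add_add_one hν k) (by positivity)

lemma expBoundedCoeffs_besselJSqCoeff (hν : 0 ≤ ν) : ExpBoundedCoeffs 2 (besselJSqCoeff ν) := by
  have h := expBoundedCoeffs_besselJCoeff hν
  rw [← one_add_one_eq_two]
  exact h.sum_antidiagonal h

lemma besselJCoeff_zero (hν : -1 < ν) : besselJCoeff ν 0 = 1 := by
  simp [besselJCoeff, (Gamma_pos_of_pos (show 0 < ν + 1 by linarith)).ne']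

lemma besselJSeries_zero (hν : -1 < ν) : besselJSeries ν 0 = 1 := by
  rw [besselJSeries, tsum_eq_single 0 fun k hk => by simp [hk]]
  simp [besselJCoeff_zero hν]

lemma continuous_besselJSeries (hν : 0 ≤ ν) : Continuous (besselJSeries ν) :=
  (expBoundedCoeffs_besselJCoeff hν).continuous_tsum_mul_pow

lemma besselJSeries_sq (hν : 0 ≤ ν) (y : ℝ) :
    besselJSeries ν y ^ 2 = ∑' n, besselJSqCoeff ν n * y ^ n := by
  have h := expBoundedCoeffs_besselJCoeff hν
  rw [sq, besselJSeries, h.tsum_mul_pow_mul_tsum_mul_pow h]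
  rfl

lemma besselJ_eq_rpow_mul_besselJSeries (hν : -1 < ν) {x : ℝ} (hx : 0 < x) :
    besselJ ν x = (x / 2) ^ ν / Gamma (ν + 1) * besselJSeries ν ((x / 2) ^ 2) := by
  have hΓ : Gamma (ν + 1) ≠ 0 := (Gamma_pos_of_pos (by linarith)).ne'
  rw [besselJ, besselJSeries, ← tsum_mul_left]
  refine tsum_congr fun k => ?_
  rw [show 2 * (k : ℝ) + ν = ((2 * k : ℕ) : ℝ) + ν by push_cast; ring,
    rpow_add (by positivity), rpow_natCast, pow_mul, besselJCoeff]
  field_simp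

lemma rpow_two_mul_add_one {x y : ℝ} (hx : 0 ≤ x) (hy : 0 ≤ y) :
    x ^ (2 * y + 1) = (x ^ y) ^ 2 * x := by
  rw [rpow_add_one' hx (by linarith), mul_comm 2 y, rpow_mul hx, rpow_two]

lemma rpow_add_two_mul_natCast {x p : ℝ} (hx : 0 ≤ x) (hp : 0 < p) (n : ℕ) :
    x ^ (p + (2 * n : ℕ)) = x ^ p * (x ^ 2) ^ n := by
  rw [rpow_add_natCast' hx (by positivity), pow_mul]

lemma div_two_sq_pow (x : ℝ) (n : ℕ) : ((x / 2) ^ 2) ^ n = (x ^ 2) ^ n / 4 ^ n := by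
  rw [div_pow, div_pow]
  norm_num

lemma summable_besselJSqCoeff_mul_rpow (hν : 0 ≤ ν) {R : ℝ} (hR : 0 ≤ R) :
    Summable fun n => |besselJSqCoeff ν n / (Gamma (ν + 1) ^ 2 * (2 ^ ν) ^ 2 * 4 ^ n)| *
      R ^ (2 * ν + 1 + (2 * n : ℕ)) := by
  have h := ((expBoundedCoeffs_besselJSqCoeff hν).summable_norm_mul_pow ((R / 2) ^ 2)).mul_right
    (R ^ (2 * ν + 1) / (Gamma (ν + 1) ^ 2 * (2 ^ ν) ^ 2))
  refine h.congr fun n => ?_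
  rw [rpow_add_two_mul_natCast hR (by linarith), norm_mul, Real.norm_eq_abs, Real.norm_eq_abs,
    abs_div, abs_of_pos (by positivity : (0 : ℝ) < Gamma (ν + 1) ^ 2 * (2 ^ ν) ^ 2 * 4 ^ n),
    abs_of_nonneg (by positivity : (0 : ℝ) ≤ ((R / 2) ^ 2) ^ n), div_two_sq_pow]
  field_simp

lemma besselJ_sq_mul_self_eq_tsum (hν : 0 ≤ ν) {r : ℝ} (hr : 0 ≤ r) :
    besselJ ν r ^ 2 * r = ∑' n, besselJSqCoeff ν n / (Gamma (ν + 1) ^ 2 * (2 ^ ν) ^ 2 * 4 ^ n) *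
      r ^ (2 * ν + 1 + (2 * n : ℕ)) := by
  rcases hr.eq_or_lt with rfl | hr
  · simp [zero_rpow, show ∀ n : ℕ, 2 * ν + 1 + 2 * (n : ℝ) ≠ 0 from fun n => by positivity]
  have hΓ : Gamma (ν + 1) ≠ 0 := (Gamma_pos_of_pos (by linarith)).ne'
  rw [besselJ_eq_rpow_mul_besselJSeries (by linarith) hr, mul_pow, besselJSeries_sq hν,
    ← tsum_mul_left, ← tsum_mul_right]
  refine tsum_congr fun n => ?_
  rw [rpow_add_two_mul_natCast hr.le (by linarith), rpow_two_mul_add_one hr.le hν,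
    div_rpow hr.le zero_le_two, div_two_sq_pow]
  field_simp

theorem integral_besselJ_sq_mul_self (hν : 0 ≤ ν) {R : ℝ} (hR : 0 ≤ R) :
    ∫ r in (0 : ℝ)..R, besselJ ν r ^ 2 * r = ((R / 2) ^ ν / Gamma (ν + 1)) ^ 2 * R ^ 2 *
      ∑' n, besselJSqCoeff ν n * ((R / 2) ^ 2) ^ n / (2 * ν + 2 * n + 2) := by
  rw [intervalIntegral.integral_congr fun r hr => besselJ_sq_mul_self_eq_tsum hν
      (by rw [Set.uIcc_of_le hR] at hr; exact hr.1),
    integral_tsum_mul_rpow hR (fun n => by positivity) (summable_besselJSqCoeff_mul_rpow hν hR),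
    ← tsum_mul_left]
  refine tsum_congr fun n => ?_
  have hn : (0 : ℝ) < 2 * ν + 2 * n + 2 := by positivity
  rw [rpow_add_one' hR (by positivity), rpow_add_two_mul_natCast hR (by linarith),
    rpow_two_mul_add_one hR hν, div_rpow hR zero_le_two, div_two_sq_pow]
  push_cast
  field_simp
  ring

theorem integral_besselJ_sq_mul_self_pos (hν : 0 ≤ ν) {R : ℝ} (hR : 0 < R) :
    0 < ∫ r in (0 : ℝ)..R, besselJ ν r ^ 2 * r := by
  have hcont : ContinuousOn (fun r => besselJ ν r ^ 2 * r) (Set.Icc 0 R) :=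
    (continuousOn_tsum_mul_rpow (fun n => by positivity)
      (summable_besselJSqCoeff_mul_rpow hν hR.le)).congr
      fun r hr => besselJ_sq_mul_self_eq_tsum hν hr.1
  have hlim : Tendsto (fun r : ℝ => besselJSeries ν ((r / 2) ^ 2)) (𝓝[>] 0) (𝓝 1) := by
    have h := ((continuous_besselJSeries hν).comp (by fun_prop : Continuous fun r : ℝ =>
      (r / 2) ^ 2)).tendsto 0
    simp only [Function.comp_def, zero_div, ne_eq, OfNat.ofNat_ne_zero, not_false_eq_true,
      zero_pow, besselJSeries_zero (by linarith : -1 < ν)] at h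
    exact h.mono_left nhdsWithin_le_nhds
  obtain ⟨c, hseries, hcR⟩ := ((hlim.eventually (lt_mem_nhds one_pos)).and
    (Ioc_mem_nhdsGT hR)).exists
  refine intervalIntegral.integral_pos hR hcont (fun r hr => mul_nonneg (sq_nonneg _) hr.1.le)
    ⟨c, Set.Ioc_subset_Icc_self hcR, ?_⟩
  rw [besselJ_eq_rpow_mul_besselJSeries (by linarith) hcR.1]
  have := Gamma_pos_of_pos (show 0 < ν + 1 by linarith)
  have := hcR.1
  positivity

theorem rpow_neg_half_mul_besselJ_div_sqrt_integral (hν : 0 ≤ ν) {R : ℝ} (hR : 0 < R) :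
    R ^ (-(1 / 2) : ℝ) * besselJ ν R / √(∫ r in (0 : ℝ)..R, besselJ ν r ^ 2 * r) =
      R ^ (-(3 / 2) : ℝ) * besselJSeries ν ((R / 2) ^ 2) /
        √(∑' n, besselJSqCoeff ν n * ((R / 2) ^ 2) ^ n / (2 * ν + 2 * n + 2)) := by
  have hK : 0 < (R / 2) ^ ν / Gamma (ν + 1) :=
    div_pos (by positivity) (Gamma_pos_of_pos (by linarith))
  rw [integral_besselJ_sq_mul_self hν hR.le, sqrt_mul (by positivity), sqrt_mul' _ (sq_nonneg R),
    sqrt_sq hK.le, sqrt_sq hR.le, besselJ_eq_rpow_mul_besselJSeries (by linarith) hR,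
    show (-(1 / 2) : ℝ) = -(3 / 2) + 1 by norm_num, rpow_add_one hR.ne']
  field_simp

end Bessel

lemma besselJCoeff_half (m k : ℕ) :
    besselJCoeff (m + 1 / 2) k = (-1) ^ k * Gamma (m + 3 / 2) / (k ! * Gamma (m + k + 3 / 2)) := by
  rw [besselJCoeff, show (m : ℝ) + 1 / 2 + 1 = m + 3 / 2 by ring,
    show (k : ℝ) + (m + 1 / 2) + 1 = m + k + 3 / 2 by ring]

lemma besselJSqCoeff_half (m n : ℕ) :
    besselJSqCoeff (m + 1 / 2) n = (-1) ^ n * ∑ p ∈ antidiagonal n,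
      Gamma (m + 3 / 2) ^ 2 / (p.1 ! * p.2 ! * Gamma (m + p.1 + 3 / 2) * Gamma (m + p.2 + 3 / 2)) := by
  rw [besselJSqCoeff, mul_sum]
  refine sum_congr rfl fun p hp => ?_
  rw [besselJCoeff_half, besselJCoeff_half, ← HasAntidiagonal.mem_antidiagonal.1 hp, pow_add]
  ring

lemma I1_eq (m : ℕ) (R : ℝ) :
    I1 m R = √(2 * m + 3) * R ^ (-(3 / 2) : ℝ) * (besselJSeries (m + 1 / 2) ((R / 2) ^ 2) - 1) := by
  have hν : (0 : ℝ) ≤ m + 1 / 2 := by positivity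
  have hsum := ((expBoundedCoeffs_besselJCoeff hν).summable_norm_mul_pow ((R / 2) ^ 2)).of_norm
  rw [besselJSeries, hsum.tsum_eq_zero_add, besselJCoeff_zero (by linarith), pow_zero, mul_one,
    add_sub_cancel_left, I1, ← tsum_mul_left]
  refine tsum_congr fun k => ?_
  rw [besselJCoeff_half, pow_mul]
  ring

lemma summable_besselJSqCoeff_mul_pow_div {ν : ℝ} (hν : 0 ≤ ν) (y : ℝ) :
    Summable fun n => besselJSqCoeff ν n * y ^ n / (2 * ν + 2 * n + 2) := by
  refine .of_norm_bounded ((expBoundedCoeffs_besselJSqCoeff hν).summable_norm_mul_pow y)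
    fun n => ?_
  rw [norm_div, Real.norm_of_nonneg (by positivity : (0 : ℝ) ≤ 2 * ν + 2 * n + 2)]
  exact div_le_self (norm_nonneg _) (by linarith [(n.cast_nonneg : (0 : ℝ) ≤ n)])

lemma one_add_I2_eq (m : ℕ) (R : ℝ) :
    1 + I2 m R = (2 * m + 3) *
      ∑' n, besselJSqCoeff (m + 1 / 2) n * ((R / 2) ^ 2) ^ n / (2 * (m + 1 / 2) + 2 * n + 2) := by
  have hν : (0 : ℝ) ≤ m + 1 / 2 := by positivity
  rw [(summable_besselJSqCoeff_mul_pow_div hν _).tsum_eq_zero_add, mul_add, ← tsum_mul_left, I2]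
  congr 1
  · rw [besselJSqCoeff, Nat.antidiagonal_zero, sum_singleton, besselJCoeff_zero (by linarith)]
    field_simp
    ring
  refine tsum_congr fun k => ?_
  rw [besselJSqCoeff_half, pow_mul]
  push_cast
  ring

theorem besselJ_ratio_eq (m : ℕ) (r0 : ℝ) (hr0 : 0 < r0) :
    0 < ∫ r in (0 : ℝ)..r0, besselJ ((m : ℝ) + 1 / 2) r ^ 2 * r ∧
    r0 ^ (-(1 / 2) : ℝ) * besselJ ((m : ℝ) + 1 / 2) r0 /
        Real.sqrt (∫ r in (0 : ℝ)..r0, besselJ ((m : ℝ) + 1 / 2) r ^ 2 * r) =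
      (Real.sqrt (2 * (m : ℝ) + 3) * r0 ^ (-(3 / 2) : ℝ) + I1 m r0) /
        Real.sqrt (1 + I2 m r0) := by
  have hν : (0 : ℝ) ≤ m + 1 / 2 := by positivity
  refine ⟨integral_besselJ_sq_mul_self_pos hν hr0, ?_⟩
  have hsqrt : 0 < √(2 * (m : ℝ) + 3) := by positivity
  rw [rpow_neg_half_mul_besselJ_div_sqrt_integral hν hr0, I1_eq, one_add_I2_eq,
    Real.sqrt_mul (by positivity)]
  field_simp
  ring
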